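/- Let f(x) = φ(x) − arcsin x for x ∈ [0,1], where φ(x) = (π(2 − √2)/(π − 2√2))·(√(1 + x) − √(1 − x)) / (√2(4 − π)/(π − 2√2) + √(1 + x) + √(1 − x)). Then the function t ↦ f(sin t)/(t³(π/2 − t)) tends, as t → 0⁺, to the limit α = ((4 + √2)π − 12√2)/((24 − 12√2)π²), and moreover α > 0. -/

import Mathlib

open Filter

/-- The upper bound `φ` for `arcsin` obtained by the λ-method of Mitrinović–Vasić. -/
noncomputable def phiBound (x : ℝ) : ℝ :=
  (Real.pi * (2 - Real.sqrt 2) / (Real.pi - 2 * Real.sqrt 2)) *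
      (Real.sqrt (1 + x) - Real.sqrt (1 - x)) /
    (Real.sqrt 2 * (4 - Real.pi) / (Real.pi - 2 * Real.sqrt 2) +
      Real.sqrt (1 + x) + Real.sqrt (1 - x))

open Real Set Topology Asymptotics

/-!
For `t ∈ [-π/2, π/2]` the half-angle formulas give `√(1 ± sin t) = cos (t/2) ± sin (t/2)`. Writing
`B = √2 (4 - π) / (π - 2√2)`, the first constant of `φ` is `B + 2`, so
`φ (sin t) - t = (2 (B + 2) sin (t/2) - t (B + 2 cos (t/2))) / (B + 2 cos (t/2))`.
Because the two constants differ by exactly `2`, the Taylor expansions of `sin` and `cos` make the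
terms of order `t` in the numerator cancel: it is `(4 - B)/24 · t³ + O(t⁵)`. Dividing by
`t³ (π/2 - t)` and letting the denominator tend to `(B + 2) π/2` gives `α`; and `α > 0` amounts
to `π > (24√2 - 12)/7 ≈ 3.1345`.
-/

theorem tendsto_div_pow_of_isBigO {𝕜 : Type*} [NormedDivisionRing 𝕜] {f : 𝕜 → 𝕜} {c : 𝕜}
    {n m : ℕ} (hnm : n < m) (hf : (fun x => f x - c * x ^ n) =O[𝓝 0] fun x => x ^ m) :
    Tendsto (fun x => f x / x ^ n) (𝓝[≠] 0) (𝓝 c) := by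
  have h := ((hf.trans_isLittleO (isLittleO_pow_pow hnm)).mono
    (nhdsWithin_le_nhds (s := {0}ᶜ))).tendsto_div_nhds_zero
  rw [← tendsto_sub_nhds_zero_iff]
  refine h.congr' ?_
  filter_upwards [self_mem_nhdsWithin] with x hx
  rw [sub_div, mul_div_assoc, div_self (pow_ne_zero _ hx), mul_one]

theorem sin_sub_taylor_isBigO : (fun x : ℝ => sin x - (x - x ^ 3 / 6)) =O[𝓝 0] fun x => x ^ 5 := by
  refine IsBigO.of_bound (1 / 100) ?_
  filter_upwards [Metric.closedBall_mem_nhds (0 : ℝ) one_pos] with x hx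
  rw [mem_closedBall_zero_iff, norm_eq_abs] at hx
  simpa [norm_eq_abs, abs_pow, div_eq_inv_mul] using sin_bound hx

theorem cos_sub_taylor_isBigO : (fun x : ℝ => cos x - (1 - x ^ 2 / 2)) =O[𝓝 0] fun x => x ^ 4 := by
  refine IsBigO.of_bound (5 / 96) ?_
  filter_upwards [Metric.closedBall_mem_nhds (0 : ℝ) one_pos] with x hx
  rw [mem_closedBall_zero_iff, norm_eq_abs] at hx
  simpa [norm_eq_abs, abs_pow, mul_comm] using cos_bound hx

theorem isBigO_comp_div_const {f : ℝ → ℝ} {n : ℕ} (hf : f =O[𝓝 0] fun x => x ^ n) (c : ℝ) :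
    (fun t => f (t / c)) =O[𝓝 0] fun t => t ^ n := by
  have hc : Tendsto (fun t : ℝ => t / c) (𝓝 0) (𝓝 0) := by
    simpa using (tendsto_id (x := 𝓝 (0 : ℝ))).div_const c
  refine (hf.comp_tendsto hc).trans ((isBigO_const_mul_self (c ^ n)⁻¹ _ _).congr_left fun t => ?_)
  rw [Function.comp_apply, div_pow, div_eq_inv_mul]

theorem abs_sin_half_le_cos_half {x : ℝ} (hx : x ∈ Icc (-(π / 2)) (π / 2)) :
    |sin (x / 2)| ≤ cos (x / 2) := by
  have hcos : 0 ≤ cos x := cos_nonneg_of_mem_Icc hx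
  have hcos_half : 0 ≤ cos (x / 2) :=
    cos_nonneg_of_mem_Icc ⟨by linarith [hx.1, pi_pos], by linarith [hx.2, pi_pos]⟩
  have hdouble : cos x = 2 * cos (x / 2) ^ 2 - 1 := by rw [← cos_two_mul]; ring_nf
  refine abs_le.2 (abs_le_of_sq_le_sq' ?_ hcos_half)
  nlinarith [sin_sq_add_cos_sq (x / 2)]

theorem sin_eq_two_mul_sin_half_mul_cos_half (x : ℝ) : sin x = 2 * sin (x / 2) * cos (x / 2) := by
  rw [← sin_two_mul]; ring_nf

theorem sqrt_one_add_sin {x : ℝ} (hx : x ∈ Icc (-(π / 2)) (π / 2)) :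
    √(1 + sin x) = cos (x / 2) + sin (x / 2) := by
  have h := abs_le.1 (abs_sin_half_le_cos_half hx)
  rw [← sqrt_sq (by linarith : 0 ≤ cos (x / 2) + sin (x / 2)), sin_eq_two_mul_sin_half_mul_cos_half]
  congr 1
  linear_combination -sin_sq_add_cos_sq (x / 2)

theorem sqrt_one_sub_sin {x : ℝ} (hx : x ∈ Icc (-(π / 2)) (π / 2)) :
    √(1 - sin x) = cos (x / 2) - sin (x / 2) := by
  have h := abs_le.1 (abs_sin_half_le_cos_half hx)
  rw [← sqrt_sq (by linarith : 0 ≤ cos (x / 2) - sin (x / 2)), sin_eq_two_mul_sin_half_mul_cos_half]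
  congr 1
  linear_combination -sin_sq_add_cos_sq (x / 2)

theorem isBigO_phi_numerator (B : ℝ) :
    (fun t : ℝ => 2 * (B + 2) * sin (t / 2) - t * (B + 2 * cos (t / 2)) - (4 - B) / 24 * t ^ 3)
      =O[𝓝 0] fun t => t ^ 5 := by
  have hsin := isBigO_comp_div_const sin_sub_taylor_isBigO 2
  have hcos := (isBigO_refl (fun t : ℝ => t) _).mul (isBigO_comp_div_const cos_sub_taylor_isBigO 2)
  have hcos' := hcos.congr_right (g₂ := fun t => t ^ 5) fun t => by ring
  exact ((hsin.const_mul_left (2 * (B + 2))).sub (hcos'.const_mul_left 2)).congr_left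
    fun t => by ring

noncomputable def phiB : ℝ := √2 * (4 - π) / (π - 2 * √2)

theorem two_mul_sqrt_two_lt_pi : 2 * √2 < π := by
  nlinarith [sq_sqrt (zero_le_two : (0 : ℝ) ≤ 2), sqrt_nonneg 2, pi_gt_three]

theorem phiB_pos : 0 < phiB :=
  div_pos (mul_pos (by positivity) (by linarith [pi_lt_four]))
    (by linarith [two_mul_sqrt_two_lt_pi])

theorem phiBound_eq (x : ℝ) :
    phiBound x = (phiB + 2) * (√(1 + x) - √(1 - x)) / (phiB + √(1 + x) + √(1 - x)) := by
  have h : π * (2 - √2) / (π - 2 * √2) = phiB + 2 := by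
    rw [phiB, div_add' _ _ _ (by linarith [two_mul_sqrt_two_lt_pi])]
    ring
  rw [phiBound, h, phiB]

theorem phiB_add_two_mul_cos_half_pos {t : ℝ} (ht : t ∈ Icc (-(π / 2)) (π / 2)) :
    0 < phiB + 2 * cos (t / 2) := by
  linarith [phiB_pos, (abs_nonneg _).trans (abs_sin_half_le_cos_half ht)]

theorem phiBound_sin_sub_arcsin_sin {t : ℝ} (ht : t ∈ Icc (-(π / 2)) (π / 2)) :
    phiBound (sin t) - arcsin (sin t) =
      (2 * (phiB + 2) * sin (t / 2) - t * (phiB + 2 * cos (t / 2))) / (phiB + 2 * cos (t / 2)) := by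
  have hD := (phiB_add_two_mul_cos_half_pos ht).ne'
  rw [phiBound_eq, sqrt_one_add_sin ht, sqrt_one_sub_sin ht, arcsin_sin ht.1 ht.2,
    show phiB + (cos (t / 2) + sin (t / 2)) + (cos (t / 2) - sin (t / 2)) = phiB + 2 * cos (t / 2)
      by ring]
  field_simp
  ring

theorem alpha_eq_phiB : ((4 + √2) * π - 12 * √2) / ((24 - 12 * √2) * π ^ 2) =
    (4 - phiB) / 24 * ((phiB + 2) * (π / 2))⁻¹ := by
  have h1 : π - 2 * √2 ≠ 0 := by linarith [two_mul_sqrt_two_lt_pi]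
  have h2 : 2 - √2 ≠ 0 := by nlinarith [sq_sqrt (zero_le_two : (0 : ℝ) ≤ 2), sqrt_nonneg 2]
  have hA : phiB + 2 = π * (2 - √2) / (π - 2 * √2) := by
    rw [phiB, div_add' _ _ _ h1]; ring
  have h4 : 4 - phiB = ((4 + √2) * π - 12 * √2) / (π - 2 * √2) := by
    rw [phiB, sub_div' h1]; ring
  rw [hA, h4, show (24 : ℝ) - 12 * √2 = 12 * (2 - √2) by ring]
  generalize π - 2 * √2 = d at h1 ⊢
  field_simp
  ring

theorem alpha_pos : 0 < ((4 + √2) * π - 12 * √2) / ((24 - 12 * √2) * π ^ 2) := by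
  have h2 := sq_sqrt (zero_le_two : (0 : ℝ) ≤ 2)
  have h0 := sqrt_nonneg 2
  apply div_pos
  · nlinarith [pi_gt_d2]
  · have : 0 < 24 - 12 * √2 := by nlinarith
    positivity

theorem limit_at_zero :
    Tendsto
      (fun t : ℝ =>
        (phiBound (Real.sin t) - Real.arcsin (Real.sin t)) /
          (t ^ 3 * (Real.pi / 2 - t)))
      (nhdsWithin 0 (Set.Ioi 0))
      (nhds (((4 + Real.sqrt 2) * Real.pi - 12 * Real.sqrt 2) /
        ((24 - 12 * Real.sqrt 2) * Real.pi ^ 2))) ∧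
    0 < ((4 + Real.sqrt 2) * Real.pi - 12 * Real.sqrt 2) /
        ((24 - 12 * Real.sqrt 2) * Real.pi ^ 2) := by
  refine ⟨?_, alpha_pos⟩
  have hnum := (tendsto_div_pow_of_isBigO (by norm_num) (isBigO_phi_numerator phiB)).mono_left
    (nhdsGT_le_nhdsNE 0)
  have hden : Tendsto (fun t => (phiB + 2 * cos (t / 2)) * (π / 2 - t)) (𝓝[>] 0)
      (𝓝 ((phiB + 2) * (π / 2))) := by
    have hc : Continuous fun t => (phiB + 2 * cos (t / 2)) * (π / 2 - t) := by fun_prop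
    simpa using hc.continuousWithinAt (x := 0) (s := Ioi 0) |>.tendsto
  rw [alpha_eq_phiB]
  refine (hnum.mul (hden.inv₀ (mul_pos (by linarith [phiB_pos]) pi_div_two_pos).ne')).congr' ?_
  filter_upwards [Ioo_mem_nhdsGT pi_div_two_pos] with t ht
  rw [phiBound_sin_sub_arcsin_sin ⟨by linarith [ht.1, pi_pos], ht.2.le⟩, div_div,
    ← div_eq_mul_inv, div_div, mul_left_comm]
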